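/- Let X be a geometry whose lines have at least three points, E a subspace of X, and π: X ⇢ X/E the quotient partial morphism. Any partial morphism φ: X ⇢ X' with exceptional subspace E factors uniquely as φ = φ̃∘π through a morphism φ̃: X/E → X'. -/
import Mathlib


/-- A *geometry*: a closure space presented by its family of subspaces, satisfying
axioms G1 (∅, univ, singletons are subspaces), G2 (intersections of subspaces are
subspaces), G3 (MacLane–Steinitz exchange: no subspace strictly between `S` and `S ∨ x`)
and G4 (finitary). -/
structure GeometryOn (X : Type*) where
  IsSubspace : Set X → Prop
  empty_isSubspace : IsSubspace ∅
  univ_isSubspace : IsSubspace Set.univ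
  singleton_isSubspace : ∀ x : X, IsSubspace {x}
  sInter_isSubspace : ∀ 𝒮 : Set (Set X), (∀ S ∈ 𝒮, IsSubspace S) → IsSubspace (⋂₀ 𝒮)
  exchange : ∀ (S : Set X) (x : X), IsSubspace S → x ∉ S →
    ¬ ∃ S' : Set X, IsSubspace S' ∧ S ⊂ S' ∧ S' ⊂ ⋂₀ {T | IsSubspace T ∧ S ∪ {x} ⊆ T}
  finitary : ∀ (A : Set X) (x : X), x ∈ ⋂₀ {T | IsSubspace T ∧ A ⊆ T} →
    ∃ F : Finset X, ↑F ⊆ A ∧ x ∈ ⋂₀ {T | IsSubspace T ∧ ↑F ⊆ T}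

namespace GeometryOn

variable {X X' : Type*}

/-- The closure of `A`: the least subspace containing `A`. -/
def cl (G : GeometryOn X) (A : Set X) : Set X := ⋂₀ {T | G.IsSubspace T ∧ A ⊆ T}

/-- `A` is independent: no point of `A` lies in the closure of the remaining ones. -/
def Independent (G : GeometryOn X) (A : Set X) : Prop := ∀ a ∈ A, a ∉ G.cl (A \ {a})

/-- `B` is a basis of the subspace `S`: independent and generating `S`. -/
def IsBasisOf (G : GeometryOn X) (B S : Set X) : Prop :=
  B ⊆ S ∧ G.Independent B ∧ G.cl B = S

/-- `S` has (finite) dimension `d ∈ ℤ`: it has a basis with `d + 1` elements. -/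
def HasDimZ (G : GeometryOn X) (S : Set X) (d : ℤ) : Prop :=
  ∃ B : Finset X, G.IsBasisOf ↑B S ∧ (B.card : ℤ) = d + 1

/-- A morphism of geometries: preimages of subspaces are subspaces. -/
def IsMorphism (G : GeometryOn X) (G' : GeometryOn X') (φ : X → X') : Prop :=
  ∀ S' : Set X', G'.IsSubspace S' → G.IsSubspace (φ ⁻¹' S')

end GeometryOn

namespace GeometryOn

/-- The equivalence relation on `X ∖ E` defining the quotient `X/E`:
`x₁ ∼ x₂ ↔ x₁ ∨ E = x₂ ∨ E`. -/
def QRel {X : Type*} (G : GeometryOn X) (E : Set X) (x₁ x₂ : {x : X // x ∉ E}) : Prop :=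
  G.cl (E ∪ {x₁.1}) = G.cl (E ∪ {x₂.1})

/-- The distinguished family of subsets of `X/E`: the sets `S/E` for `S` a subspace of
`X` containing `E`. -/
def QSubspace {X : Type*} (G : GeometryOn X) (E : Set X)
    (T : Set (Quot (G.QRel E))) : Prop :=
  ∃ S : Set X, G.IsSubspace S ∧ E ⊆ S ∧
    T = Quot.mk (G.QRel E) '' {x : {x : X // x ∉ E} | x.1 ∈ S}

/-- A partial morphism `X ⇢ X'` with exceptional subspace `E`: a morphism of geometries
from the subgeometry `X ∖ E` to `X'` which is constant on the classes `x ∨ E`. -/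
def IsPartialMorphism {X X' : Type*} (G : GeometryOn X) (G' : GeometryOn X')
    (E : Set X) (φ : {x : X // x ∉ E} → X') : Prop :=
  (∀ S' : Set X', G'.IsSubspace S' →
    ∃ S : Set X, G.IsSubspace S ∧ φ ⁻¹' S' = Subtype.val ⁻¹' S) ∧
  (∀ x₁ x₂ : {x : X // x ∉ E}, G.cl (E ∪ {x₁.1}) = G.cl (E ∪ {x₂.1}) → φ x₁ = φ x₂)

end GeometryOn

namespace GeometryOn

variable {X : Type*} (G : GeometryOn X)

lemma subset_cl (A : Set X) : A ⊆ G.cl A :=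
  fun _ hx _ hT => hT.2 hx

lemma cl_isSubspace (A : Set X) : G.IsSubspace (G.cl A) :=
  G.sInter_isSubspace _ (fun _ hS => hS.1)

lemma cl_subset {A S : Set X} (hS : G.IsSubspace S) (h : A ⊆ S) : G.cl A ⊆ S :=
  fun _ hx => hx S ⟨hS, h⟩

lemma cl_of_isSubspace {S : Set X} (hS : G.IsSubspace S) : G.cl S = S :=
  subset_antisymm (G.cl_subset hS subset_rfl) (G.subset_cl S)

lemma cl_mono {A B : Set X} (h : A ⊆ B) : G.cl A ⊆ G.cl B :=
  G.cl_subset (G.cl_isSubspace B) (h.trans (G.subset_cl B))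

lemma cl_singleton (x : X) : G.cl {x} = {x} :=
  G.cl_of_isSubspace (G.singleton_isSubspace x)

/-- The standard MacLane–Steinitz exchange property, derived from axiom G3. -/
lemma exchange' (A : Set X) (a x : X) (hx : x ∈ G.cl (A ∪ {a}))
    (hxA : x ∉ G.cl A) : a ∈ G.cl (A ∪ {x}) := by
  by_contra haS'
  have haA : a ∉ G.cl A := fun h => hxA <| by
    have : G.cl (A ∪ {a}) ⊆ G.cl A := G.cl_subset (G.cl_isSubspace A)
      (Set.union_subset (G.subset_cl A) (Set.singleton_subset_iff.mpr h))
    exact this hx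
  have hclcl : G.cl (G.cl A ∪ {a}) = G.cl (A ∪ {a}) := by
    apply subset_antisymm
    · exact G.cl_subset (G.cl_isSubspace _) (Set.union_subset
        (G.cl_mono Set.subset_union_left)
        (Set.singleton_subset_iff.mpr (G.subset_cl _ (Set.mem_union_right _ rfl))))
    · exact G.cl_mono (Set.union_subset_union_left _ (G.subset_cl A))
  refine G.exchange (G.cl A) a (G.cl_isSubspace A) haA ⟨G.cl (A ∪ {x}), G.cl_isSubspace _, ?_, ?_⟩
  · constructor
    · exact G.cl_mono Set.subset_union_left
    · intro hsub
      exact hxA (hsub (G.subset_cl _ (Set.mem_union_right _ rfl)))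
  · have heq : (⋂₀ {T | G.IsSubspace T ∧ G.cl A ∪ {a} ⊆ T}) = G.cl (A ∪ {a}) := hclcl
    rw [heq]
    constructor
    · exact G.cl_subset (G.cl_isSubspace _) (Set.union_subset
        ((Set.subset_union_left).trans (G.subset_cl _))
        (Set.singleton_subset_iff.mpr hx))
    · intro hsub
      exact haS' (hsub (G.subset_cl _ (Set.mem_union_right _ rfl)))

end GeometryOn

open GeometryOn in
/-- if the lines of `X` have at least three points, any partial morphism
`φ : X ⇢ X'` with exceptional subspace `E` factors uniquely through the quotient
partial morphism `π : X ⇢ X/E` via a morphism `φ̃ : X/E → X'`. -/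
theorem partial_morphism_factors {X X' : Type*} (G : GeometryOn X) (G' : GeometryOn X')
    (E : Set X) (hE : G.IsSubspace E)
    (h3 : ∀ x y : X, x ≠ y → ∃ z ∈ G.cl {x, y}, z ≠ x ∧ z ≠ y)
    (Q : GeometryOn (Quot (G.QRel E))) (hQ : Q.IsSubspace = G.QSubspace E)
    (φ : {x : X // x ∉ E} → X') (hφ : G.IsPartialMorphism G' E φ) :
    ∃! φt : Quot (G.QRel E) → X',
      Q.IsMorphism G' φt ∧ ∀ x : {x : X // x ∉ E}, φt (Quot.mk (G.QRel E) x) = φ x := by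
  obtain ⟨hφ1, hφ2⟩ := hφ
  have hclE : G.cl E = E := G.cl_of_isSubspace hE
  refine ⟨Quot.lift φ hφ2, ⟨?_, fun x => rfl⟩, ?_⟩
  · intro S' hS'
    obtain ⟨S₀, hS₀sub, hS₀⟩ := hφ1 S' hS'
    have hmem : ∀ x : {x : X // x ∉ E}, φ x ∈ S' ↔ x.1 ∈ S₀ := by
      intro x
      constructor
      · intro h; exact (hS₀ ▸ h : x ∈ Subtype.val ⁻¹' S₀)
      · intro h; exact (hS₀ ▸ (h : x ∈ Subtype.val ⁻¹' S₀) : x ∈ φ ⁻¹' S')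
    rw [hQ]
    by_cases hne : ∃ s : {x : X // x ∉ E}, s.1 ∈ S₀
    · obtain ⟨s, hs⟩ := hne
      -- saturation: anything QRel-related to `s` lies in `S₀`
      have hsat : ∀ x : {x : X // x ∉ E},
          G.cl (E ∪ {x.1}) = G.cl (E ∪ {s.1}) → x.1 ∈ S₀ := by
        intro x hx
        exact (hmem x).mp (by rw [hφ2 x s hx]; exact (hmem s).mpr hs)
      -- key claim: E ⊆ S₀
      have hES : E ⊆ S₀ := by
        intro e he
        have hse : s.1 ≠ e := fun h => s.2 (h ▸ he)
        obtain ⟨z, hz, hzs, hze⟩ := h3 s.1 e hse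
        have hzpair : z ∈ G.cl ({s.1} ∪ {e}) := by
          rwa [Set.singleton_union]
        have hzE : z ∉ E := by
          intro hzE
          have hz2 : z ∈ G.cl ({e} ∪ {s.1}) := by
            rwa [Set.union_comm] at hzpair
          have hznot : z ∉ G.cl {e} := by
            rw [G.cl_singleton]; exact fun h => hze h
          have hsin : s.1 ∈ G.cl ({e} ∪ {z}) := G.exchange' {e} s.1 z hz2 hznot
          have : s.1 ∈ E := by
            have : G.cl ({e} ∪ {z}) ⊆ E := by
              rw [← hclE]
              exact G.cl_mono (Set.union_subset
                (Set.singleton_subset_iff.mpr he) (Set.singleton_subset_iff.mpr hzE))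
            exact this hsin
          exact s.2 this
        -- z ∈ cl (E ∪ {s}) and z ∉ cl E, so s ∈ cl (E ∪ {z})
        have hzEs : z ∈ G.cl (E ∪ {s.1}) := by
          refine G.cl_mono ?_ hzpair
          exact Set.union_subset
            (Set.singleton_subset_iff.mpr (Set.mem_union_right E rfl))
            (Set.singleton_subset_iff.mpr (Set.mem_union_left _ he))
        have hznotE : z ∉ G.cl E := by rw [hclE]; exact hzE
        have hsEz : s.1 ∈ G.cl (E ∪ {z}) := G.exchange' E s.1 z hzEs hznotE
        have hrel : G.cl (E ∪ {z}) = G.cl (E ∪ {s.1}) := by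
          apply subset_antisymm
          · exact G.cl_subset (G.cl_isSubspace _) (Set.union_subset
              ((Set.subset_union_left).trans (G.subset_cl _))
              (Set.singleton_subset_iff.mpr hzEs))
          · exact G.cl_subset (G.cl_isSubspace _) (Set.union_subset
              ((Set.subset_union_left).trans (G.subset_cl _))
              (Set.singleton_subset_iff.mpr hsEz))
        have hzS₀ : z ∈ S₀ := hsat ⟨z, hzE⟩ hrel
        -- z ∈ cl {s, e}, z ∉ cl {s}, so e ∈ cl {s, z} ⊆ S₀
        have hznotS : z ∉ G.cl {s.1} := by
          rw [G.cl_singleton]; exact fun h => hzs h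
        have heSZ : e ∈ G.cl ({s.1} ∪ {z}) := G.exchange' {s.1} e z hzpair hznotS
        have : G.cl ({s.1} ∪ {z}) ⊆ S₀ := G.cl_subset hS₀sub (Set.union_subset
          (Set.singleton_subset_iff.mpr hs) (Set.singleton_subset_iff.mpr hzS₀))
        exact this heSZ
      refine ⟨S₀, hS₀sub, hES, ?_⟩
      ext q
      induction q using Quot.ind with
      | _ x =>
        simp only [Set.mem_preimage, Set.mem_image]
        constructor
        · intro h
          exact ⟨x, (hmem x).mp h, rfl⟩
        · rintro ⟨y, hy, hq⟩
          have : Quot.lift φ hφ2 (Quot.mk (G.QRel E) y) ∈ S' := (hmem y).mpr hy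
          rwa [hq] at this
    · refine ⟨E, hE, subset_rfl, ?_⟩
      ext q
      induction q using Quot.ind with
      | _ x =>
        simp only [Set.mem_preimage, Set.mem_image]
        constructor
        · intro h
          exact absurd ⟨x, (hmem x).mp h⟩ hne
        · rintro ⟨y, hy, -⟩
          exact absurd hy y.2
  · rintro ψ ⟨-, hψ⟩
    funext q
    induction q using Quot.ind with
    | _ x => exact hψ x
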